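/- Let S' ⊂ ℝ^d be a nonempty finite set with Fly Bloom Filter w ∈ {0,1}^m, fix a point x ∈ ℝ^d with FlyHash h(x), and let x_NN = argmin_{x' ∈ S'} ‖x − x'‖ for any fixed distance metric ‖·‖. Then the expectation over the random choice of the projection matrix M satisfies E_M[(wᵀh(x))/ρ] ≤ 1 − q(x, x_NN). (This is Lemma 1, parts (iv) and (vi); in fact E_M[(wᵀh(x))/ρ] ≤ 1 − q(x, x') for every x' ∈ S'.) -/

import Mathlib

open MeasureTheory ProbabilityTheory

noncomputable section

open scoped Classical

/-- Dot product of a binary vector `θ` with a real vector `x`. -/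
def bdot {d : ℕ} (θ : Fin d → Bool) (x : Fin d → ℝ) : ℝ :=
  ∑ i, if θ i = true then x i else 0

/-- The set of binary vectors in `{0,1}^d` with exactly `s` ones. -/
def sparseSet (d s : ℕ) : Finset (Fin d → Bool) :=
  Finset.univ.filter fun θ => (Finset.univ.filter fun i => θ i = true).card = s

lemma sparseSet_nonempty {d s : ℕ} (h : s ≤ d) : (sparseSet d s).Nonempty := by
  obtain ⟨t, -, ht⟩ := Finset.exists_subset_card_eq (s := (Finset.univ : Finset (Fin d)))
    (n := s) (by simpa using h)
  refine ⟨fun i => decide (i ∈ t), ?_⟩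
  simp only [sparseSet, Finset.mem_filter, Finset.mem_univ, true_and]
  rw [← ht]
  congr 1
  ext i
  simp

/-- `Q`: the uniform distribution over `s`-sparse binary vectors in `{0,1}^d`. -/
def Q (d s : ℕ) (h : s ≤ d) : Measure (Fin d → Bool) :=
  (PMF.uniformOfFinset (sparseSet d s) (sparseSet_nonempty h)).toMeasure

/-- Distribution of the random projection matrix `M`: `m` i.i.d. rows drawn from `Q`. -/
def MQ (d s m : ℕ) (h : s ≤ d) : Measure (Fin m → Fin d → Bool) :=
  Measure.pi fun _ => Q d s h

/-- The FBF score `wᵀh(x)`, where `w` is the Fly Bloom Filter of the finite set `S'`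
(built from the matrix `M` with thresholds `τ`) and `h(x)` is the FlyHash of `x`. -/
def score {d m : ℕ} (τ : (Fin d → ℝ) → ℝ) (M : Fin m → Fin d → Bool)
    (S' : Finset (Fin d → ℝ)) (x : Fin d → ℝ) : ℝ :=
  (Finset.univ.filter fun j : Fin m =>
    (∀ x' ∈ S', bdot (M j) x' < τ x') ∧ τ x ≤ bdot (M j) x).card

/-- `q(x, x') = Pr_{θ∼Q}(θᵀx' ≥ τ_{x'} | θᵀx ≥ τ_x)`. -/
def qprob {d : ℕ} (s : ℕ) (h : s ≤ d) (τ : (Fin d → ℝ) → ℝ) (x x' : Fin d → ℝ) : ℝ :=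
  ((Q d s h)[|{θ | τ x ≤ bdot θ x}] {θ | τ x' ≤ bdot θ x'}).toReal

/-! Linearity of expectation turns `E_M[wᵀh(x)]` into `m` times the `Q`-probability that a single
row `θ` fires for `x` but for no point of `S'`. That event lies inside
`{θᵀx ≥ τ_x} \ {θᵀx' ≥ τ_{x'}}` for each `x' ∈ S'`, whose probability is
`Pr(θᵀx ≥ τ_x) · (1 - q(x, x')) = (ρ / m) · (1 - q(x, x'))`. -/

instance {d s : ℕ} (h : s ≤ d) : IsProbabilityMeasure (Q d s h) := by
  unfold Q; infer_instance

theorem integral_card_filter_mem_pi {ι α : Type*} [Fintype ι] [MeasurableSpace α]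
    (μ : Measure α) [IsProbabilityMeasure μ] {C : Set α} (hC : MeasurableSet C) :
    ∫ M, ((Finset.univ.filter fun j => M j ∈ C).card : ℝ) ∂Measure.pi (fun _ : ι => μ) =
      Fintype.card ι * μ.real C := by
  have hcard : ∀ M : ι → α, ((Finset.univ.filter fun j => M j ∈ C).card : ℝ) =
      ∑ j, C.indicator 1 (M j) := fun M => by
    simp only [Finset.natCast_card_filter, Set.indicator_apply, Pi.one_apply]
  simp_rw [hcard]
  rw [integral_finsetSum _ fun j _ => integrable_comp_eval ((integrable_const 1).indicator hC)]
  have hrow : ∀ j, ∫ M, C.indicator 1 (M j) ∂Measure.pi (fun _ : ι => μ) = μ.real C := fun j => by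
    rw [integral_comp_eval (μ := fun _ : ι => μ) (i := j)
      (stronglyMeasurable_one.indicator hC).aestronglyMeasurable, integral_indicator_one hC]
  simp [hrow]

theorem measureReal_diff_eq_mul_one_sub_cond {Ω : Type*} [MeasurableSpace Ω] (μ : Measure Ω)
    [IsFiniteMeasure μ] {A B : Set Ω} (hA : MeasurableSet A) (hB : MeasurableSet B) :
    μ.real (A \ B) = μ.real A * (1 - (μ[|A] B).toReal) := by
  have hinter : μ.real (A ∩ B) = (μ[|A] B).toReal * μ.real A := by
    rw [measureReal_def, measureReal_def, ← ENNReal.toReal_mul, cond_mul_eq_inter hA]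
  linarith [measureReal_inter_add_sdiff (μ := μ) (s := A) hB]

-- `a * (b / a) / b` is `1`, or `0` when `a = 0` or `b = 0`.
theorem mul_div_mul_div_le {a b t : ℝ} (ht : 0 ≤ t) : a * (b / a * t) / b ≤ t := by
  have hrw : a * (b / a * t) / b = a / b * (a / b)⁻¹ * t := by rw [inv_div]; ring
  rw [hrw]
  exact mul_le_of_le_one_left ht mul_inv_le_one

def scoringRows {d : ℕ} (τ : (Fin d → ℝ) → ℝ) (S' : Finset (Fin d → ℝ)) (x : Fin d → ℝ) :
    Set (Fin d → Bool) :=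
  {θ | (∀ x' ∈ S', bdot θ x' < τ x') ∧ τ x ≤ bdot θ x}

theorem scoringRows_subset_diff {d : ℕ} (τ : (Fin d → ℝ) → ℝ) {S' : Finset (Fin d → ℝ)}
    (x : Fin d → ℝ) {x' : Fin d → ℝ} (hx' : x' ∈ S') :
    scoringRows τ S' x ⊆ {θ | τ x ≤ bdot θ x} \ {θ | τ x' ≤ bdot θ x'} :=
  fun _ hθ => ⟨hθ.2, (hθ.1 x' hx').not_ge⟩

theorem score_eq_card_filter_mem {d m : ℕ} (τ : (Fin d → ℝ) → ℝ) (M : Fin m → Fin d → Bool)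
    (S' : Finset (Fin d → ℝ)) (x : Fin d → ℝ) :
    score τ M S' x = (Finset.univ.filter fun j => M j ∈ scoringRows τ S' x).card := by
  unfold score scoringRows
  congr

theorem integral_score {d s m : ℕ} (hsd : s ≤ d) (τ : (Fin d → ℝ) → ℝ)
    (S' : Finset (Fin d → ℝ)) (x : Fin d → ℝ) :
    ∫ M, score τ M S' x ∂(MQ d s m hsd) = m * (Q d s hsd).real (scoringRows τ S' x) := by
  simp_rw [score_eq_card_filter_mem, MQ]
  simpa using integral_card_filter_mem_pi (ι := Fin m) (Q d s hsd) .of_discrete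

theorem qprob_le_one {d s : ℕ} (hsd : s ≤ d) (τ : (Fin d → ℝ) → ℝ) (x x' : Fin d → ℝ) :
    qprob s hsd τ x x' ≤ 1 :=
  ENNReal.toReal_le_of_le_ofReal zero_le_one (by simpa using prob_le_one)

theorem Q_real_scoringRows_le {d s : ℕ} (hsd : s ≤ d) (τ : (Fin d → ℝ) → ℝ)
    {S' : Finset (Fin d → ℝ)} (x : Fin d → ℝ) {x' : Fin d → ℝ} (hx' : x' ∈ S') :
    (Q d s hsd).real (scoringRows τ S' x) ≤
      (Q d s hsd).real {θ | τ x ≤ bdot θ x} * (1 - qprob s hsd τ x x') := by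
  rw [qprob, ← measureReal_diff_eq_mul_one_sub_cond _ .of_discrete .of_discrete]
  exact measureReal_mono (scoringRows_subset_diff τ x hx')

theorem fbf_expected_score_upper_bound_general
    (d s m ρ : ℕ) (hsd : s ≤ d)
    (τ : (Fin d → ℝ) → ℝ)
    (hτ : ∀ x : Fin d → ℝ, ((Q d s hsd) {θ | τ x ≤ bdot θ x}).toReal = (ρ : ℝ) / m)
    (S' : Finset (Fin d → ℝ)) (x : Fin d → ℝ)
    (xNN : Fin d → ℝ) (hmem : xNN ∈ S') :
    (∫ M, score τ M S' x / ρ ∂(MQ d s m hsd)) ≤ 1 - qprob s hsd τ x xNN ∧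
    ∀ x' ∈ S', (∫ M, score τ M S' x / ρ ∂(MQ d s m hsd)) ≤ 1 - qprob s hsd τ x x' := by
  have key : ∀ x' ∈ S',
      (∫ M, score τ M S' x / ρ ∂(MQ d s m hsd)) ≤ 1 - qprob s hsd τ x x' := fun x' hx' =>
    calc (∫ M, score τ M S' x / ρ ∂(MQ d s m hsd))
        = m * (Q d s hsd).real (scoringRows τ S' x) / ρ := by rw [integral_div, integral_score]
      _ ≤ m * (ρ / m * (1 - qprob s hsd τ x x')) / ρ := by
          rw [← hτ x]
          gcongr
          exact Q_real_scoringRows_le hsd τ x hx'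
      _ ≤ 1 - qprob s hsd τ x x' := mul_div_mul_div_le (sub_nonneg.2 (qprob_le_one hsd τ x x'))
  exact ⟨key xNN hmem, key⟩

/-- Lemma 1, parts (iv) and (vi).
For the Fly Bloom Filter `w` of a nonempty finite set `S' ⊂ ℝ^d`, a point `x` with FlyHash
`h(x)`, and `x_NN` the nearest neighbor of `x` in `S'` under any fixed distance metric,
`E_M[(wᵀh(x))/ρ] ≤ 1 − q(x, x_NN)`; in fact `E_M[(wᵀh(x))/ρ] ≤ 1 − q(x, x')` for every
`x' ∈ S'`. -/
theorem fbf_expected_score_upper_bound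
    (d s m ρ : ℕ) (hs : 0 < s) (hsd : s ≤ d) (hρ : 0 < ρ) (hρm : ρ ≤ m)
    (τ : (Fin d → ℝ) → ℝ)
    (hτ : ∀ x : Fin d → ℝ, ((Q d s hsd) {θ | τ x ≤ bdot θ x}).toReal = (ρ : ℝ) / m)
    (S' : Finset (Fin d → ℝ)) (hS' : S'.Nonempty) (x : Fin d → ℝ)
    (dist' : (Fin d → ℝ) → (Fin d → ℝ) → ℝ)
    (xNN : Fin d → ℝ) (hmem : xNN ∈ S')
    (hmin : ∀ x' ∈ S', dist' x xNN ≤ dist' x x') :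
    (∫ M, score τ M S' x / ρ ∂(MQ d s m hsd)) ≤ 1 - qprob s hsd τ x xNN ∧
    ∀ x' ∈ S', (∫ M, score τ M S' x / ρ ∂(MQ d s m hsd)) ≤ 1 - qprob s hsd τ x x' :=
  fbf_expected_score_upper_bound_general d s m ρ hsd τ hτ S' x xNN hmem
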